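/- arXiv:2207.00045 — 8 statements merged into one kernel-verified Lean document; each statement's English description precedes it below -/
import Mathlib

section
/- Let α₀, δ be coprime Gaussian integers, α_k = α₀ + k·δ, and let β ∈ ℤ[i] be a nonzero Gaussian integer dividing α_t for some t ∈ ℤ. Write δ = c + d·i and define ν(x+iy) = (x²+y²)/gcd(x,y). Assume gcd(c,d) = 1. Then for any k ∈ ℤ, β divides α_k if and only if k ≡ t (mod ν(β)). -/
/-- ν(x+iy) = (x²+y²)/gcd(x,y) for a Gaussian integer. -/
def nu (β : GaussianInt) : ℤ := (β.re ^ 2 + β.im ^ 2) / Int.gcd β.re β.im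

/-!
Since `β` divides `α_t` and `α₀, δ` are coprime, `β` is coprime to `δ`; hence
`β ∣ α_k ↔ β ∣ (k - t) δ ↔ β ∣ k - t`. For a rational integer `n`, multiplying by `conj β`
turns `β ∣ n` into `N(β) ∣ n·x ∧ N(β) ∣ n·y` (with `β = x + iy`), i.e. `N(β) ∣ n·gcd(x, y)`
by Bézout, and `N(β) = ν(β)·gcd(x, y)`; so `β ∣ n ↔ ν(β) ∣ n`.
-/

theorem IsCoprime.dvd_add_mul_iff_dvd_sub {R : Type*} [CommRing R] {β δ a x : R}
    (hβδ : IsCoprime β δ) (hx : β ∣ a + x * δ) (y : R) :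
    β ∣ a + y * δ ↔ β ∣ y - x := by
  have hsplit : a + y * δ = (a + x * δ) + (y - x) * δ := by ring
  rw [hsplit, dvd_add_right hx]
  exact ⟨hβδ.dvd_of_dvd_mul_right, fun h => h.mul_right δ⟩

theorem Int.dvd_mul_and_dvd_mul_iff_dvd_mul_gcd {N n x y : ℤ} :
    N ∣ n * x ∧ N ∣ n * y ↔ N ∣ n * Int.gcd x y := by
  constructor
  · rintro ⟨hx, hy⟩
    rw [Int.gcd_eq_gcd_ab, mul_add, ← mul_assoc, ← mul_assoc]
    exact dvd_add (hx.mul_right _) (hy.mul_right _)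
  · intro h
    exact ⟨h.trans (mul_dvd_mul_left n (Int.gcd_dvd_left x y)),
      h.trans (mul_dvd_mul_left n (Int.gcd_dvd_right x y))⟩

theorem nu_mul_gcd (β : GaussianInt) :
    nu β * Int.gcd β.re β.im = β.re ^ 2 + β.im ^ 2 := by
  refine Int.ediv_mul_cancel (dvd_add ?_ ?_)
  · exact (Int.gcd_dvd_left _ _).trans (dvd_pow_self _ two_ne_zero)
  · exact (Int.gcd_dvd_right _ _).trans (dvd_pow_self _ two_ne_zero)

theorem GaussianInt.norm_eq_sq_add_sq (β : GaussianInt) :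
    β.norm = β.re ^ 2 + β.im ^ 2 := by
  rw [Zsqrtd.norm_def]; ring

theorem dvd_intCast_iff_nu_dvd {β : GaussianInt} (hβ : β ≠ 0) (n : ℤ) :
    β ∣ (n : GaussianInt) ↔ nu β ∣ n := by
  have hgcd : (Int.gcd β.re β.im : ℤ) ≠ 0 := by
    rw [Int.natCast_ne_zero, ne_eq, Int.gcd_eq_zero_iff]
    exact fun ⟨hre, him⟩ => hβ (Zsqrtd.ext hre him)
  have hre : ((n : GaussianInt) * star β).re = n * β.re := by simp
  have him : ((n : GaussianInt) * star β).im = -(n * β.im) := by simp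
  rw [← mul_dvd_mul_iff_right (star_ne_zero.mpr hβ), ← Zsqrtd.norm_eq_mul_conj,
    Zsqrtd.intCast_dvd, hre, him, dvd_neg, Int.dvd_mul_and_dvd_mul_iff_dvd_mul_gcd,
    GaussianInt.norm_eq_sq_add_sq, ← nu_mul_gcd, mul_dvd_mul_iff_right hgcd]

theorem divisibility_periodic_general (α₀ δ : GaussianInt) (h : IsCoprime α₀ δ)
    (β : GaussianInt) (hβ : β ≠ 0) (t : ℤ) (ht : β ∣ α₀ + (t : GaussianInt) * δ) (k : ℤ) :
    β ∣ α₀ + (k : GaussianInt) * δ ↔ k ≡ t [ZMOD nu β] := by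
  have hβδ : IsCoprime β δ :=
    (IsCoprime.add_mul_right_left_iff.mpr h).of_isCoprime_of_dvd_left ht
  rw [hβδ.dvd_add_mul_iff_dvd_sub ht, ← Int.cast_sub, dvd_intCast_iff_nu_dvd hβ,
    Int.modEq_iff_dvd, dvd_sub_comm]

theorem divisibility_periodic (α₀ δ : GaussianInt) (h : IsCoprime α₀ δ)
    (hδ : Int.gcd δ.re δ.im = 1)
    (β : GaussianInt) (hβ : β ≠ 0) (t : ℤ) (ht : β ∣ α₀ + (t : GaussianInt) * δ) (k : ℤ) :
    β ∣ α₀ + (k : GaussianInt) * δ ↔ k ≡ t [ZMOD nu β] :=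
  divisibility_periodic_general α₀ δ h β hβ t ht k
end

section
/- Let α₀ = a + bi and δ = c + di be coprime Gaussian integers with gcd(c,d) = 1, let Δ = a·d − b·c, and let p be a rational prime. Then p divides some element of the sequence α_k = α₀ + k·δ (k ∈ ℤ) in ℤ[i] if and only if p divides Δ. -/
/-!
An integer divides a Gaussian integer iff it divides both coordinates, so everything happens in `ℤ`.
Writing `u c + v d = 1`, one has `Δ = d (a + k c) - c (b + k d)`, and conversely the choice
`k = -(a u + b v)` gives `a + k c = v Δ` and `b + k d = -u Δ`.
-/

theorem exists_dvd_add_mul_and_dvd_add_mul_iff {R : Type*} [CommRing R] {a b c d : R} (m : R)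
    (hcd : IsCoprime c d) :
    (∃ k : R, m ∣ a + k * c ∧ m ∣ b + k * d) ↔ m ∣ a * d - b * c := by
  constructor
  · rintro ⟨k, hac, hbd⟩
    have hΔ : a * d - b * c = d * (a + k * c) - c * (b + k * d) := by ring
    exact hΔ ▸ dvd_sub (dvd_mul_of_dvd_right hac d) (dvd_mul_of_dvd_right hbd c)
  · intro hΔ
    obtain ⟨u, v, huv⟩ := hcd
    refine ⟨-(a * u + b * v), ?_, ?_⟩
    · have hac : a + -(a * u + b * v) * c = v * (a * d - b * c) := by
        linear_combination -a * huv
      exact hac ▸ dvd_mul_of_dvd_right hΔ v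
    · have hbd : b + -(a * u + b * v) * d = -u * (a * d - b * c) := by
        linear_combination -b * huv
      exact hbd ▸ dvd_mul_of_dvd_right hΔ (-u)

theorem Zsqrtd.intCast_dvd_add_intCast_mul_iff {d : ℤ} (m k : ℤ) (α δ : ℤ√d) :
    (m : ℤ√d) ∣ α + k * δ ↔ m ∣ α.re + k * δ.re ∧ m ∣ α.im + k * δ.im := by
  simp [Zsqrtd.intCast_dvd]

theorem rational_prime_in_divisor_set_general (α₀ δ : GaussianInt)
    (hδ : Int.gcd δ.re δ.im = 1) (p : ℕ) :
    (∃ k : ℤ, (p : GaussianInt) ∣ α₀ + (k : GaussianInt) * δ) ↔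
      (p : ℤ) ∣ α₀.re * δ.im - α₀.im * δ.re := by
  rw [← exists_dvd_add_mul_and_dvd_add_mul_iff _ (Int.isCoprime_iff_gcd_eq_one.mpr hδ)]
  refine exists_congr fun k => ?_
  exact_mod_cast Zsqrtd.intCast_dvd_add_intCast_mul_iff (p : ℤ) k α₀ δ

theorem rational_prime_in_divisor_set (α₀ δ : GaussianInt) (h : IsCoprime α₀ δ)
    (hδ : Int.gcd δ.re δ.im = 1) (p : ℕ) (hp : p.Prime) :
    (∃ k : ℤ, (p : GaussianInt) ∣ α₀ + (k : GaussianInt) * δ) ↔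
      (p : ℤ) ∣ α₀.re * δ.im - α₀.im * δ.re :=
  rational_prime_in_divisor_set_general α₀ δ hδ p
end

section
/- Let α₀, δ be coprime Gaussian integers with δ = c + di, gcd(c,d) = 1, and let α_k = α₀ + k·δ. Suppose μ₁, …, μ_r are Gaussian integers each dividing some element of the sequence (α_k), such that ν(μ₁), …, ν(μ_r) are pairwise coprime positive integers. Given any b₁, …, b_r ∈ ℤ, there exists t ∈ ℤ, unique modulo ν(μ₁)···ν(μ_r), such that μ_j divides α_{t + b_j} for all 1 ≤ j ≤ r. -/
open Function

theorem exists_forall_dvd_sub_of_pairwise_isCoprime {ι R : Type*} [Finite ι] [CommRing R]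
    {m : ι → R} (hm : Pairwise (IsCoprime on m)) (c : ι → R) :
    ∃ t : R, ∀ i, m i ∣ t - c i := by
  have hI : Pairwise (IsCoprime on fun i ↦ Ideal.span {m i}) :=
    fun i j hij ↦ (Ideal.isCoprime_span_singleton_iff _ _).mpr (hm hij)
  simpa only [Ideal.mem_span_singleton] using Ideal.exists_forall_sub_mem_ideal hI c

theorem IsCoprime.dvd_add_mul_iff_dvd_sub_s9 {R : Type*} [CommRing R] {α₀ δ μ k : R}
    (h : IsCoprime α₀ δ) (hk : μ ∣ α₀ + k * δ) (m : R) :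
    μ ∣ α₀ + m * δ ↔ μ ∣ m - k := by
  have hμδ : IsCoprime μ δ := (h.add_mul_right_left k).of_isCoprime_of_dvd_left hk
  rw [show α₀ + m * δ = α₀ + k * δ + (m - k) * δ by ring, dvd_add_right hk]
  exact ⟨hμδ.dvd_of_dvd_mul_right, (dvd_mul_of_dvd_left · δ)⟩

namespace GaussianInt

theorem re_sq_add_im_sq_eq_nu_mul_gcd (μ : GaussianInt) :
    μ.re ^ 2 + μ.im ^ 2 = nu μ * Int.gcd μ.re μ.im := by
  have hg : (Int.gcd μ.re μ.im : ℤ) ∣ μ.re ^ 2 + μ.im ^ 2 :=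
    dvd_add (Dvd.dvd.pow (Int.gcd_dvd_left _ _) two_ne_zero)
      (Dvd.dvd.pow (Int.gcd_dvd_right _ _) two_ne_zero)
  exact (Int.ediv_mul_cancel hg).symm

theorem gcd_re_im_eq_zero_iff {μ : GaussianInt} : Int.gcd μ.re μ.im = 0 ↔ μ = 0 := by
  rw [Int.gcd_eq_zero_iff, Zsqrtd.ext_iff, Zsqrtd.re_zero, Zsqrtd.im_zero]

/-- Writing `μ = g (a + b i)` with `g = gcd(re μ, im μ)`,
we have `ν(μ) = g (a² + b²) = μ (a - b i)`. -/
theorem dvd_nu (μ : GaussianInt) : μ ∣ (nu μ : GaussianInt) := by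
  set g := ((Int.gcd μ.re μ.im : ℕ) : ℤ) with hg
  obtain ⟨a, ha⟩ : g ∣ μ.re := Int.gcd_dvd_left μ.re μ.im
  obtain ⟨b, hb⟩ : g ∣ μ.im := Int.gcd_dvd_right μ.re μ.im
  have hnu : nu μ = g * (a ^ 2 + b ^ 2) := by
    have hN : μ.re ^ 2 + μ.im ^ 2 = g * (g * (a ^ 2 + b ^ 2)) := by rw [ha, hb]; ring
    rcases eq_or_ne g 0 with hg0 | hg0
    · rw [nu, ← hg, hg0, Int.ediv_zero, zero_mul]
    · rw [nu, ← hg, hN, Int.mul_ediv_cancel_left _ hg0]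
  refine ⟨⟨a, -b⟩, Zsqrtd.ext ?_ ?_⟩
  · simp only [Zsqrtd.re_intCast, Zsqrtd.re_mul, hnu, ha, hb]; ring
  · simp only [Zsqrtd.im_intCast, Zsqrtd.im_mul, ha, hb]; ring

theorem nu_dvd_of_dvd_intCast {μ : GaussianInt} {n : ℤ} (h : μ ∣ (n : GaussianInt)) :
    nu μ ∣ n := by
  rcases eq_or_ne μ 0 with rfl | hμ
  · simp_all
  have hg0 : (Int.gcd μ.re μ.im : ℤ) ≠ 0 :=
    Int.natCast_ne_zero.mpr (gcd_re_im_eq_zero_iff.not.mpr hμ)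
  -- `N(μ) = μ μ̄` divides `n μ̄`, hence both `n re μ` and `n im μ`.
  have hN : ((μ.re ^ 2 + μ.im ^ 2 : ℤ) : GaussianInt) ∣ n * star μ := by
    rw [show μ.re ^ 2 + μ.im ^ 2 = μ.norm by rw [Zsqrtd.norm_def]; ring, Zsqrtd.norm_eq_mul_conj]
    exact mul_dvd_mul_right h _
  rw [Zsqrtd.intCast_dvd] at hN
  simp only [Zsqrtd.re_mul, Zsqrtd.im_mul, Zsqrtd.re_intCast, Zsqrtd.im_intCast, Zsqrtd.re_star,
    Zsqrtd.im_star, mul_zero, zero_mul, neg_zero, add_zero, mul_neg, dvd_neg] at hN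
  have hgcd := Int.dvd_coe_gcd hN.1 hN.2
  rw [Int.gcd_mul_left, Nat.cast_mul, Int.natCast_natAbs, re_sq_add_im_sq_eq_nu_mul_gcd,
    mul_dvd_mul_iff_right hg0] at hgcd
  exact dvd_abs _ _ |>.mp hgcd

theorem dvd_intCast_iff_nu_dvd (μ : GaussianInt) (n : ℤ) :
    μ ∣ (n : GaussianInt) ↔ nu μ ∣ n :=
  ⟨nu_dvd_of_dvd_intCast, fun h ↦ (dvd_nu μ).trans (Int.cast_dvd_cast _ _ h)⟩

end GaussianInt

theorem crt_for_gaussian_lines_general (α₀ δ : GaussianInt) (h : IsCoprime α₀ δ)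
    (r : ℕ) (μ : Fin r → GaussianInt)
    (hdiv : ∀ j, ∃ k : ℤ, μ j ∣ α₀ + (k : GaussianInt) * δ)
    (hcop : ∀ j j', j ≠ j' → IsCoprime (nu (μ j)) (nu (μ j')))
    (b : Fin r → ℤ) :
    ∃ t : ℤ, (∀ j, μ j ∣ α₀ + ((t + b j : ℤ) : GaussianInt) * δ) ∧
      ∀ t' : ℤ, (∀ j, μ j ∣ α₀ + ((t' + b j : ℤ) : GaussianInt) * δ) →
        t' ≡ t [ZMOD ∏ j, nu (μ j)] := by
  choose k hk using hdiv
  have hline : ∀ j (t : ℤ),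
      μ j ∣ α₀ + ((t + b j : ℤ) : GaussianInt) * δ ↔ nu (μ j) ∣ t - (k j - b j) := fun j t ↦ by
    rw [h.dvd_add_mul_iff_dvd_sub_s9 (hk j), ← Int.cast_sub, GaussianInt.dvd_intCast_iff_nu_dvd,
      sub_sub_eq_add_sub]
  obtain ⟨t, ht⟩ := exists_forall_dvd_sub_of_pairwise_isCoprime hcop fun j ↦ k j - b j
  refine ⟨t, fun j ↦ (hline j t).mpr (ht j), fun t' ht' ↦ Int.modEq_iff_dvd.mpr ?_⟩
  refine Fintype.prod_dvd_of_coprime hcop fun j ↦ ?_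
  simpa only [sub_sub_sub_cancel_right] using dvd_sub (ht j) ((hline j t').mp (ht' j))

theorem crt_for_gaussian_lines (α₀ δ : GaussianInt) (h : IsCoprime α₀ δ)
    (hδ : Int.gcd δ.re δ.im = 1) (r : ℕ) (μ : Fin r → GaussianInt)
    (hdiv : ∀ j, ∃ k : ℤ, μ j ∣ α₀ + (k : GaussianInt) * δ)
    (hpos : ∀ j, 0 < nu (μ j))
    (hcop : ∀ j j', j ≠ j' → IsCoprime (nu (μ j)) (nu (μ j')))
    (b : Fin r → ℤ) :
    ∃ t : ℤ, (∀ j, μ j ∣ α₀ + ((t + b j : ℤ) : GaussianInt) * δ) ∧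
      ∀ t' : ℤ, (∀ j, μ j ∣ α₀ + ((t' + b j : ℤ) : GaussianInt) * δ) →
        t' ≡ t [ZMOD ∏ j, nu (μ j)] :=
  crt_for_gaussian_lines_general α₀ δ h r μ hdiv hcop b
end

section
/- Let α₀, δ be coprime Gaussian integers with δ = c + di and gcd(c,d) = 1, and α_k = α₀ + k·δ. For any k ∈ ℤ and any n with 2 ≤ n ≤ 6, among the n consecutive Gaussian integers α_{k+1}, …, α_{k+n} there is at least one that is coprime in ℤ[i] to all the others. -/
set_option synthInstance.maxSize 2000
set_option synthInstance.maxHeartbeats 2000000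
set_option maxHeartbeats 2000000
set_option maxRecDepth 100000

namespace SixAux

open GaussianInt

def q2 : GaussianInt := ⟨1, 1⟩
def q5a : GaussianInt := ⟨2, 1⟩
def q5b : GaussianInt := ⟨2, -1⟩

lemma prime_of_norm_prime (q : GaussianInt) (hq : (Zsqrtd.norm q).natAbs.Prime) :
    Prime q := by
  rw [← irreducible_iff_prime]
  constructor
  · intro hu
    rw [← Zsqrtd.norm_eq_one_iff] at hu
    rw [hu] at hq
    exact hq.ne_one rfl
  · intro a b hab
    have h : (Zsqrtd.norm a).natAbs * (Zsqrtd.norm b).natAbs = (Zsqrtd.norm q).natAbs := by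
      rw [← Int.natAbs_mul, ← Zsqrtd.norm_mul, hab]
    rcases hq.isUnit_or_isUnit h.symm with h' | h' <;>
      [left; right] <;> rw [← Zsqrtd.norm_eq_one_iff, Nat.isUnit_iff.mp h']

lemma prime_q2 : Prime q2 := prime_of_norm_prime _ (by decide)
lemma prime_q5a : Prime q5a := prime_of_norm_prime _ (by decide)
lemma prime_q5b : Prime q5b := prime_of_norm_prime _ (by decide)

lemma prime_three : Prime (3 : GaussianInt) := by
  have : Fact (Nat.Prime 3) := ⟨by norm_num⟩
  have h := (GaussianInt.prime_iff_mod_four_eq_three_of_nat_prime 3).mpr rfl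
  exact_mod_cast h

lemma q2_dvd_int {t : ℤ} (h : q2 ∣ (t : GaussianInt)) : (2:ℤ) ∣ t := by
  obtain ⟨u, hu⟩ := h
  have h1 := congrArg Zsqrtd.re hu
  have h2 := congrArg Zsqrtd.im hu
  simp [Zsqrtd.re_mul, Zsqrtd.im_mul, q2] at h1 h2
  omega

lemma three_dvd_int {t : ℤ} (h : (3 : GaussianInt) ∣ (t : GaussianInt)) : (3:ℤ) ∣ t := by
  obtain ⟨u, hu⟩ := h
  have h1 := congrArg Zsqrtd.re hu
  have h3 : ((3 : GaussianInt)).re = 3 := rfl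
  have h4 : ((3 : GaussianInt)).im = 0 := rfl
  simp [Zsqrtd.re_mul, Zsqrtd.im_mul, h3, h4] at h1
  omega

lemma q5a_dvd_int {t : ℤ} (h : q5a ∣ (t : GaussianInt)) : (5:ℤ) ∣ t := by
  obtain ⟨u, hu⟩ := h
  have h1 := congrArg Zsqrtd.re hu
  have h2 := congrArg Zsqrtd.im hu
  simp [Zsqrtd.re_mul, Zsqrtd.im_mul, q5a] at h1 h2
  omega

lemma q5b_dvd_int {t : ℤ} (h : q5b ∣ (t : GaussianInt)) : (5:ℤ) ∣ t := by
  obtain ⟨u, hu⟩ := h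
  have h1 := congrArg Zsqrtd.re hu
  have h2 := congrArg Zsqrtd.im hu
  simp [Zsqrtd.re_mul, Zsqrtd.im_mul, q5b] at h1 h2
  omega

lemma factor60 : (60 : GaussianInt) = -(q2^4 * 3 * (q5a * q5b)) := by decide

lemma classify {p : GaussianInt} (hp : Prime p) (h : p ∣ (60 : GaussianInt)) :
    p ∣ q2 ∨ p ∣ (3 : GaussianInt) ∨ p ∣ q5a ∨ p ∣ q5b := by
  rw [factor60, dvd_neg] at h
  rcases hp.dvd_mul.mp h with h' | h'
  · rcases hp.dvd_mul.mp h' with h'' | h''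
    · exact Or.inl (hp.dvd_of_dvd_pow h'')
    · exact Or.inr (Or.inl h'')
  · rcases hp.dvd_mul.mp h' with h'' | h''
    · exact Or.inr (Or.inr (Or.inl h''))
    · exact Or.inr (Or.inr (Or.inr h''))

lemma rigid0 {q : GaussianInt} (hq : Prime q)
    {β δ : GaussianInt} (hA : ∀ m : ℤ, IsCoprime (β + (m : GaussianInt) * δ) δ)
    {a b : ℤ} (ha : q ∣ β + (a : GaussianInt) * δ) (hb : q ∣ β + (b : GaussianInt) * δ) :
    q ∣ ((a - b : ℤ) : GaussianInt) := by
  have hqδ : ¬ q ∣ δ := fun hd => hq.not_unit ((hA a).isUnit_of_dvd' ha hd)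
  have hsub : q ∣ ((a - b : ℤ) : GaussianInt) * δ := by
    have hs := dvd_sub ha hb
    have he : (β + (a : GaussianInt) * δ) - (β + (b : GaussianInt) * δ)
        = ((a - b : ℤ) : GaussianInt) * δ := by push_cast; ring
    rwa [he] at hs
  rcases hq.dvd_mul.mp hsub with h | h
  · exact h
  · exact absurd h hqδ

lemma rigid {q : GaussianInt} (hq : Prime q) {p : ℤ}
    (hcast : ∀ t : ℤ, q ∣ (t : GaussianInt) → p ∣ t)
    {β δ : GaussianInt} (hA : ∀ m : ℤ, IsCoprime (β + (m : GaussianInt) * δ) δ)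
    {a b : ℤ} (ha : q ∣ β + (a : GaussianInt) * δ) (hb : q ∣ β + (b : GaussianInt) * δ) :
    p ∣ a - b :=
  hcast _ (rigid0 hq hA ha hb)

lemma core_fin : ∀ (n : Fin 7) (a : Fin 2) (b : Fin 3) (c d : Fin 5),
    2 ≤ (n:ℕ) → ∃ j : Fin 7, 1 ≤ (j:ℕ) ∧ (j:ℕ) ≤ (n:ℕ) ∧
      ∀ j' : Fin 7, 1 ≤ (j':ℕ) → (j':ℕ) ≤ (n:ℕ) → (j':ℕ) ≠ (j:ℕ) →
      ((j:ℕ) % 2 = (a:ℕ) → ¬((j':ℕ) % 2 = (a:ℕ))) ∧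
      ((j:ℕ) % 3 = (b:ℕ) → ¬((j':ℕ) % 3 = (b:ℕ))) ∧
      ((j:ℕ) % 5 = (c:ℕ) → ¬((j':ℕ) % 5 = (c:ℕ))) ∧
      ((j:ℕ) % 5 = (d:ℕ) → ¬((j':ℕ) % 5 = (d:ℕ))) := by decide

lemma core_int (n : ℤ) (hn2 : 2 ≤ n) (hn6 : n ≤ 6) (m2 m3 m5a m5b : ℤ) :
    ∃ j : ℤ, 1 ≤ j ∧ j ≤ n ∧ ∀ j' : ℤ, 1 ≤ j' → j' ≤ n → j' ≠ j →
      ((2:ℤ) ∣ j - m2 → ¬(2:ℤ) ∣ j' - m2) ∧ ((3:ℤ) ∣ j - m3 → ¬(3:ℤ) ∣ j' - m3) ∧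
      ((5:ℤ) ∣ j - m5a → ¬(5:ℤ) ∣ j' - m5a) ∧ ((5:ℤ) ∣ j - m5b → ¬(5:ℤ) ∣ j' - m5b) := by
  obtain ⟨jf, hj1, hjn, hgood⟩ := core_fin ⟨n.toNat, by omega⟩ ⟨(m2 % 2).toNat, by omega⟩
    ⟨(m3 % 3).toNat, by omega⟩ ⟨(m5a % 5).toNat, by omega⟩ ⟨(m5b % 5).toNat, by omega⟩
    (show 2 ≤ n.toNat by omega)
  simp only [Fin.val_mk] at hj1 hjn hgood
  refine ⟨((jf:ℕ):ℤ), by omega, by omega, ?_⟩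
  intro j' h1 h2 hne
  obtain ⟨g2, g3, g5a, g5b⟩ := hgood ⟨j'.toNat, by omega⟩ (by simp only [Fin.val_mk]; omega)
    (by simp only [Fin.val_mk]; omega) (by simp only [Fin.val_mk]; omega)
  simp only [Fin.val_mk] at g2 g3 g5a g5b
  exact ⟨fun hd hd' => g2 (by omega) (by omega), fun hd hd' => g3 (by omega) (by omega),
    fun hd hd' => g5a (by omega) (by omega), fun hd hd' => g5b (by omega) (by omega)⟩

lemma small_dvd_60 : ∀ d : ℤ, -5 ≤ d → d ≤ 5 → d ≠ 0 → d ∣ 60 := by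
  intro d h1 h2 h3
  interval_cases d <;> first | omega | decide

end SixAux

open SixAux in
theorem six_or_fewer_consecutive (α₀ δ : GaussianInt) (h : IsCoprime α₀ δ)
    (hδ : Int.gcd δ.re δ.im = 1) (k : ℤ) (n : ℤ) (hn2 : 2 ≤ n) (hn6 : n ≤ 6) :
    ∃ j ∈ Finset.Icc 1 n, ∀ j' ∈ Finset.Icc 1 n, j' ≠ j →
      IsCoprime (α₀ + ((k + j : ℤ) : GaussianInt) * δ)
        (α₀ + ((k + j' : ℤ) : GaussianInt) * δ) := by
  classical
  set β := α₀ + (k : GaussianInt) * δ with hβdef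
  have hβδ : IsCoprime β δ := h.add_mul_right_left _
  have hA : ∀ m : ℤ, IsCoprime (β + (m : GaussianInt) * δ) δ :=
    fun m => hβδ.add_mul_right_left _
  have hδ0 : δ ≠ 0 := by rintro rfl; simp at hδ
  have key : ∀ m : ℤ, α₀ + ((k + m : ℤ) : GaussianInt) * δ = β + (m : GaussianInt) * δ := by
    intro m; rw [hβdef]; push_cast; ring
  have rep : ∀ (q : GaussianInt) (p : ℤ), Prime q →
      (∀ t : ℤ, q ∣ (t : GaussianInt) → p ∣ t) →
      ∃ mq : ℤ, ∀ m : ℤ, q ∣ β + (m : GaussianInt) * δ → p ∣ m - mq := by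
    intro q p hq hcast
    by_cases hex : ∃ m : ℤ, q ∣ β + (m : GaussianInt) * δ
    · obtain ⟨m0, hm0⟩ := hex
      exact ⟨m0, fun m hm => rigid hq hcast hA hm hm0⟩
    · exact ⟨0, fun m hm => absurd ⟨m, hm⟩ hex⟩
  obtain ⟨m2, hm2⟩ := rep q2 2 prime_q2 (fun t => q2_dvd_int)
  obtain ⟨m3, hm3⟩ := rep 3 3 prime_three (fun t => three_dvd_int)
  obtain ⟨m5A, hm5a⟩ := rep q5a 5 prime_q5a (fun t => q5a_dvd_int)
  obtain ⟨m5B, hm5b⟩ := rep q5b 5 prime_q5b (fun t => q5b_dvd_int)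
  obtain ⟨j, hj1, hjn, hgood⟩ := core_int n hn2 hn6 m2 m3 m5A m5B
  refine ⟨j, Finset.mem_Icc.mpr ⟨hj1, hjn⟩, ?_⟩
  intro j' hj' hne
  obtain ⟨hj'1, hj'n⟩ := Finset.mem_Icc.mp hj'
  rw [key j, key j']
  by_contra hnc
  have hnz : ¬(β + (j : GaussianInt) * δ = 0 ∧ β + (j' : GaussianInt) * δ = 0) := by
    rintro ⟨hx, hy⟩
    have hz : ((j - j' : ℤ) : GaussianInt) * δ = 0 := by
      push_cast
      linear_combination hx - hy
    rcases mul_eq_zero.mp hz with hc | hc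
    · have hre := congrArg Zsqrtd.re hc
      rw [Zsqrtd.re_intCast] at hre
      simp at hre
      omega
    · exact hδ0 hc
  have hex : ∃ p : GaussianInt, Prime p ∧ p ∣ β + (j : GaussianInt) * δ ∧
      p ∣ β + (j' : GaussianInt) * δ := by
    by_contra hno
    push_neg at hno
    exact hnc (isCoprime_of_prime_dvd hnz (fun z hz hzx => hno z hz hzx))
  obtain ⟨p, hp, hpx, hpy⟩ := hex
  have hd60 : (j - j' : ℤ) ∣ 60 := small_dvd_60 _ (by omega) (by omega) (by omega)
  have hp60 : p ∣ (60 : GaussianInt) := by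
    have h1 : p ∣ ((j - j' : ℤ) : GaussianInt) := rigid0 hp hA hpx hpy
    have h2 : ((j - j' : ℤ) : GaussianInt) ∣ ((60 : ℤ) : GaussianInt) :=
      map_dvd (Int.castRingHom GaussianInt) hd60
    have h3 : ((60 : ℤ) : GaussianInt) = (60 : GaussianInt) := by push_cast; ring
    rw [h3] at h2
    exact h1.trans h2
  rcases classify hp hp60 with hq | hq | hq | hq
  · have hassoc := hp.irreducible.associated_of_dvd prime_q2.irreducible hq
    exact (hgood j' hj'1 hj'n hne).1 (hm2 j (hassoc.symm.dvd.trans hpx))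
      (hm2 j' (hassoc.symm.dvd.trans hpy))
  · have hassoc := hp.irreducible.associated_of_dvd prime_three.irreducible hq
    exact (hgood j' hj'1 hj'n hne).2.1 (hm3 j (hassoc.symm.dvd.trans hpx))
      (hm3 j' (hassoc.symm.dvd.trans hpy))
  · have hassoc := hp.irreducible.associated_of_dvd prime_q5a.irreducible hq
    exact (hgood j' hj'1 hj'n hne).2.2.1 (hm5a j (hassoc.symm.dvd.trans hpx))
      (hm5a j' (hassoc.symm.dvd.trans hpy))
  · have hassoc := hp.irreducible.associated_of_dvd prime_q5b.irreducible hq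
    exact (hgood j' hj'1 hj'n hne).2.2.2 (hm5b j (hassoc.symm.dvd.trans hpx))
      (hm5b j' (hassoc.symm.dvd.trans hpy))
end

section
/- Let α₀, δ be coprime Gaussian integers with δ = c + di, gcd(c,d) = 1, and α_k = α₀ + k·δ. Suppose 1+i, 3, 1+2i, and 1−2i each divide some element of the sequence, and suppose there exists t ∈ ℤ such that (1+2i) ∣ α_t and (1−2i) ∣ α_{t+1}. Then there exists k ∈ ℤ such that none of the seven consecutive Gaussian integers α_{k+1}, …, α_{k+7} is coprime to all of the other six. -/
private lemma gl_not_unit (π : GaussianInt) (hn : π.norm.natAbs ≠ 1) : ¬ IsUnit π := by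
  rw [← Zsqrtd.norm_eq_one_iff]; exact hn

private lemma gl_shift (π α₀ δ : GaussianInt) (t m : ℤ)
    (h : π ∣ α₀ + (t : GaussianInt) * δ) (hd : π ∣ ((m - t : ℤ) : GaussianInt)) :
    π ∣ α₀ + (m : GaussianInt) * δ := by
  have e : α₀ + (m : GaussianInt) * δ
      = (α₀ + (t : GaussianInt) * δ) + ((m - t : ℤ) : GaussianInt) * δ := by
    push_cast; ring
  rw [e]
  exact dvd_add h (hd.mul_right δ)

private lemma gl_dvd5 (n : ℤ) : (⟨1, 2⟩ : GaussianInt) ∣ ((5 * n : ℤ) : GaussianInt) := by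
  refine ⟨(⟨1, -2⟩ : GaussianInt) * (n : GaussianInt), ?_⟩
  have h5 : (5 : GaussianInt) = (⟨1, 2⟩ : GaussianInt) * ⟨1, -2⟩ := by decide
  push_cast
  rw [h5]; ring

private lemma gl_dvd5' (n : ℤ) : (⟨1, -2⟩ : GaussianInt) ∣ ((5 * n : ℤ) : GaussianInt) := by
  refine ⟨(⟨1, 2⟩ : GaussianInt) * (n : GaussianInt), ?_⟩
  have h5 : (5 : GaussianInt) = (⟨1, -2⟩ : GaussianInt) * ⟨1, 2⟩ := by decide
  push_cast
  rw [h5]; ring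

private lemma gl_dvd2 (n : ℤ) : (⟨1, 1⟩ : GaussianInt) ∣ ((2 * n : ℤ) : GaussianInt) := by
  refine ⟨(⟨1, -1⟩ : GaussianInt) * (n : GaussianInt), ?_⟩
  have h2 : (2 : GaussianInt) = (⟨1, 1⟩ : GaussianInt) * ⟨1, -1⟩ := by decide
  push_cast
  rw [h2]; ring

private lemma gl_dvd3 (n : ℤ) : (3 : GaussianInt) ∣ ((3 * n : ℤ) : GaussianInt) := by
  refine ⟨(n : GaussianInt), ?_⟩
  push_cast; ring

theorem gL_eq_seven_sufficient (α₀ δ : GaussianInt) (h : IsCoprime α₀ δ)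
    (hδ : Int.gcd δ.re δ.im = 1)
    (h2 : ∃ k : ℤ, (⟨1, 1⟩ : GaussianInt) ∣ α₀ + (k : GaussianInt) * δ)
    (h3 : ∃ k : ℤ, (3 : GaussianInt) ∣ α₀ + (k : GaussianInt) * δ)
    (h5 : ∃ k : ℤ, (⟨1, 2⟩ : GaussianInt) ∣ α₀ + (k : GaussianInt) * δ)
    (h5' : ∃ k : ℤ, (⟨1, -2⟩ : GaussianInt) ∣ α₀ + (k : GaussianInt) * δ)
    (hconsec : ∃ t : ℤ, (⟨1, 2⟩ : GaussianInt) ∣ α₀ + (t : GaussianInt) * δ ∧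
      (⟨1, -2⟩ : GaussianInt) ∣ α₀ + ((t + 1 : ℤ) : GaussianInt) * δ) :
    ∃ k : ℤ, ∀ j ∈ Finset.Icc (1 : ℤ) 7, ∃ j' ∈ Finset.Icc (1 : ℤ) 7, j' ≠ j ∧
      ¬ IsCoprime (α₀ + ((k + j : ℤ) : GaussianInt) * δ)
        (α₀ + ((k + j' : ℤ) : GaussianInt) * δ) := by
  obtain ⟨t₂, ht₂⟩ := h2
  obtain ⟨t₃, ht₃⟩ := h3
  obtain ⟨t, htA, htB⟩ := hconsec
  -- nonunits
  have u5 : ¬ IsUnit (⟨1, 2⟩ : GaussianInt) := gl_not_unit _ (by decide)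
  have u5' : ¬ IsUnit (⟨1, -2⟩ : GaussianInt) := gl_not_unit _ (by decide)
  have u2 : ¬ IsUnit (⟨1, 1⟩ : GaussianInt) := gl_not_unit _ (by decide)
  have u3 : ¬ IsUnit (3 : GaussianInt) := gl_not_unit _ (by decide)
  set k : ℤ := 6 * t + 15 * t₂ + 10 * t₃ - 1 with hk
  refine ⟨k, ?_⟩
  -- divisibility facts at positions k+1..k+7
  have dA : ∀ m : ℤ, (5 : ℤ) ∣ m - t → (⟨1, 2⟩ : GaussianInt) ∣ α₀ + (m : GaussianInt) * δ := by
    intro m ⟨c, hc⟩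
    exact gl_shift _ _ _ t m htA (by rw [hc]; exact gl_dvd5 c)
  have dB : ∀ m : ℤ, (5 : ℤ) ∣ m - (t + 1) →
      (⟨1, -2⟩ : GaussianInt) ∣ α₀ + (m : GaussianInt) * δ := by
    intro m ⟨c, hc⟩
    exact gl_shift _ _ _ (t + 1) m htB (by rw [hc]; exact gl_dvd5' c)
  have dC : ∀ m : ℤ, (2 : ℤ) ∣ m - t₂ → (⟨1, 1⟩ : GaussianInt) ∣ α₀ + (m : GaussianInt) * δ := by
    intro m ⟨c, hc⟩
    exact gl_shift _ _ _ t₂ m ht₂ (by rw [hc]; exact gl_dvd2 c)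
  have dD : ∀ m : ℤ, (3 : ℤ) ∣ m - t₃ → (3 : GaussianInt) ∣ α₀ + (m : GaussianInt) * δ := by
    intro m ⟨c, hc⟩
    exact gl_shift _ _ _ t₃ m ht₃ (by rw [hc]; exact gl_dvd3 c)
  have p1 : (⟨1, 2⟩ : GaussianInt) ∣ α₀ + ((k + 1 : ℤ) : GaussianInt) * δ :=
    dA _ ⟨t + 3 * t₂ + 2 * t₃, by rw [hk]; ring⟩
  have p6 : (⟨1, 2⟩ : GaussianInt) ∣ α₀ + ((k + 6 : ℤ) : GaussianInt) * δ :=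
    dA _ ⟨t + 3 * t₂ + 2 * t₃ + 1, by rw [hk]; ring⟩
  have p2 : (⟨1, -2⟩ : GaussianInt) ∣ α₀ + ((k + 2 : ℤ) : GaussianInt) * δ :=
    dB _ ⟨t + 3 * t₂ + 2 * t₃, by rw [hk]; ring⟩
  have p7 : (⟨1, -2⟩ : GaussianInt) ∣ α₀ + ((k + 7 : ℤ) : GaussianInt) * δ :=
    dB _ ⟨t + 3 * t₂ + 2 * t₃ + 1, by rw [hk]; ring⟩
  have p3 : (⟨1, 1⟩ : GaussianInt) ∣ α₀ + ((k + 3 : ℤ) : GaussianInt) * δ :=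
    dC _ ⟨3 * t + 7 * t₂ + 5 * t₃ + 1, by rw [hk]; ring⟩
  have p5 : (⟨1, 1⟩ : GaussianInt) ∣ α₀ + ((k + 5 : ℤ) : GaussianInt) * δ :=
    dC _ ⟨3 * t + 7 * t₂ + 5 * t₃ + 2, by rw [hk]; ring⟩
  have p4 : (3 : GaussianInt) ∣ α₀ + ((k + 4 : ℤ) : GaussianInt) * δ :=
    dD _ ⟨2 * t + 5 * t₂ + 3 * t₃ + 1, by rw [hk]; ring⟩
  have p7' : (3 : GaussianInt) ∣ α₀ + ((k + 7 : ℤ) : GaussianInt) * δ :=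
    dD _ ⟨2 * t + 5 * t₂ + 3 * t₃ + 2, by rw [hk]; ring⟩
  intro j hj
  have hnc : ∀ (π a b : GaussianInt), ¬ IsUnit π → π ∣ a → π ∣ b → ¬ IsCoprime a b :=
    fun π a b hu ha hb hcop => hu (hcop.isUnit_of_dvd' ha hb)
  obtain ⟨hj1, hj2⟩ := Finset.mem_Icc.mp hj
  interval_cases j
  · exact ⟨6, by decide, by decide, hnc _ _ _ u5 p1 p6⟩
  · exact ⟨7, by decide, by decide, hnc _ _ _ u5' p2 p7⟩
  · exact ⟨5, by decide, by decide, hnc _ _ _ u2 p3 p5⟩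
  · exact ⟨7, by decide, by decide, hnc _ _ _ u3 p4 p7'⟩
  · exact ⟨3, by decide, by decide, hnc _ _ _ u2 p5 p3⟩
  · exact ⟨1, by decide, by decide, hnc _ _ _ u5 p6 p1⟩
  · exact ⟨2, by decide, by decide, hnc _ _ _ u5' p7 p2⟩
end

section
/- Let α₀, δ be coprime Gaussian integers with δ = c + di, gcd(c,d) = 1, and α_k = α₀ + k·δ. Suppose there exists k ∈ ℤ such that none of α_{k+1}, …, α_{k+7} is coprime to all of the others. Then each of 1+i, 3, 1+2i, 1−2i divides some element of the sequence (α_n), and moreover there exists t such that one of the primes 1+2i, 1−2i divides α_t while the other divides α_{t+1}. -/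
-- helpers (already verified)
lemma gl7_norm_intCast (n : ℤ) : Zsqrtd.norm (n : GaussianInt) = n * n := by
  simp [Zsqrtd.norm]

lemma gl7_prime_of_norm_prime {a : GaussianInt} (h : Prime (Zsqrtd.norm a)) : Prime a := by
  rw [← UniqueFactorizationMonoid.irreducible_iff_prime]
  refine ⟨fun hu => ?_, fun b c hbc => ?_⟩
  · rw [(Zsqrtd.norm_eq_one_iff' (by norm_num) a).2 hu] at h
    exact h.not_unit isUnit_one
  · subst hbc
    rw [Zsqrtd.norm_mul] at h
    rcases h.irreducible.isUnit_or_isUnit rfl with hb | hc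
    · exact Or.inl (Zsqrtd.norm_eq_one_iff.1 (Int.isUnit_iff_natAbs_eq.1 hb))
    · exact Or.inr (Zsqrtd.norm_eq_one_iff.1 (Int.isUnit_iff_natAbs_eq.1 hc))

lemma gl7_prime_i1 : Prime (⟨1, 1⟩ : GaussianInt) := by
  apply gl7_prime_of_norm_prime
  have : Zsqrtd.norm (⟨1, 1⟩ : GaussianInt) = 2 := by decide
  rw [this]; exact Int.prime_two

lemma gl7_prime_i2 : Prime (⟨1, 2⟩ : GaussianInt) := by
  apply gl7_prime_of_norm_prime
  have : Zsqrtd.norm (⟨1, 2⟩ : GaussianInt) = 5 := by decide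
  rw [this]; norm_num

lemma gl7_prime_im2 : Prime (⟨1, -2⟩ : GaussianInt) := by
  apply gl7_prime_of_norm_prime
  have : Zsqrtd.norm (⟨1, -2⟩ : GaussianInt) = 5 := by decide
  rw [this]; norm_num

lemma gl7_prime_3 : Prime (3 : GaussianInt) := by
  have : Fact (Nat.Prime 3) := ⟨by norm_num⟩
  have h := (GaussianInt.prime_iff_mod_four_eq_three_of_nat_prime 3).2 (by norm_num)
  simpa using h

section
variable (α₀ δ : GaussianInt)

lemma gl7_pair (h : IsCoprime α₀ δ) {π : GaussianInt} (hπ : Prime π) {m n : ℤ}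
    (h1 : π ∣ α₀ + (m : GaussianInt) * δ) (h2 : π ∣ α₀ + (n : GaussianInt) * δ) :
    π ∣ ((m - n : ℤ) : GaussianInt) := by
  have key : (α₀ + (m : GaussianInt) * δ) - (α₀ + (n : GaussianInt) * δ)
      = ((m - n : ℤ) : GaussianInt) * δ := by push_cast; ring
  have hd : π ∣ ((m - n : ℤ) : GaussianInt) * δ := key ▸ dvd_sub h1 h2
  rcases hπ.dvd_mul.1 hd with h' | hδd
  · exact h'
  · exfalso
    have hα : π ∣ α₀ := by
      have e : α₀ = (α₀ + (m : GaussianInt) * δ) - (m : GaussianInt) * δ := by ring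
      rw [e]
      exact dvd_sub h1 (hδd.mul_left _)
    exact hπ.not_unit (h.isUnit_of_dvd' hα hδd)

lemma gl7_int_dvd {p : ℤ} (hp : Prime p) {π : GaussianInt} (hnorm : p ∣ Zsqrtd.norm π)
    {n : ℤ} (hd : π ∣ (n : GaussianInt)) : p ∣ n := by
  have h2 : Zsqrtd.norm π ∣ n * n := by
    obtain ⟨c, hc⟩ := hd
    exact ⟨Zsqrtd.norm c, by rw [← gl7_norm_intCast n, hc, Zsqrtd.norm_mul]⟩
  rcases hp.dvd_mul.1 (hnorm.trans h2) with h | h <;> exact h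

lemma gl7_spread {π : GaussianInt} {p : ℤ} (hπp : π ∣ ((p : ℤ) : GaussianInt)) {m n : ℤ}
    (hd : π ∣ α₀ + (m : GaussianInt) * δ) (hmn : p ∣ n - m) :
    π ∣ α₀ + (n : GaussianInt) * δ := by
  have e : α₀ + (n : GaussianInt) * δ
      = (α₀ + (m : GaussianInt) * δ) + ((n - m : ℤ) : GaussianInt) * δ := by push_cast; ring
  rw [e]
  exact dvd_add hd (((hπp.trans (map_dvd (Int.castRingHom GaussianInt) hmn)).mul_right δ))

lemma gl7_classify {π : GaussianInt} (hπ : Prime π) {n : ℤ} (hn : n ≠ 0)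
    (h1 : -6 ≤ n) (h2 : n ≤ 6) (hd : π ∣ (n : GaussianInt)) :
    π ∣ (⟨1, 1⟩ : GaussianInt) ∨ π ∣ 3 ∨ π ∣ (⟨1, 2⟩ : GaussianInt) ∨ π ∣ (⟨1, -2⟩ : GaussianInt) := by
  have h60 : n ∣ (60 : ℤ) := by
    interval_cases n <;> first | exact absurd rfl hn | decide
  have hd60 : π ∣ ((60 : ℤ) : GaussianInt) := hd.trans (map_dvd (Int.castRingHom GaussianInt) h60)
  have factored : ((60 : ℤ) : GaussianInt)
      = (⟨1, 1⟩ : GaussianInt) ^ 4 * 3 * ⟨1, 2⟩ * ⟨1, -2⟩ * (-1) := by decide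
  rw [factored] at hd60
  rcases hπ.dvd_mul.1 hd60 with hd' | hu
  rotate_left
  · exact absurd (isUnit_of_dvd_unit hu (IsUnit.neg isUnit_one)) hπ.not_unit
  rcases hπ.dvd_mul.1 hd' with hd'' | hx
  rotate_left
  · exact Or.inr (Or.inr (Or.inr hx))
  rcases hπ.dvd_mul.1 hd'' with hd''' | hx
  rotate_left
  · exact Or.inr (Or.inr (Or.inl hx))
  rcases hπ.dvd_mul.1 hd''' with hd4 | hx
  rotate_left
  · exact Or.inr (Or.inl hx)
  · exact Or.inl (hπ.dvd_of_dvd_pow hd4)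

end

theorem gL_eq_seven_necessary (α₀ δ : GaussianInt) (h : IsCoprime α₀ δ)
    (hδ : Int.gcd δ.re δ.im = 1)
    (hseq : ∃ k : ℤ, ∀ j ∈ Finset.Icc (1 : ℤ) 7, ∃ j' ∈ Finset.Icc (1 : ℤ) 7, j' ≠ j ∧
      ¬ IsCoprime (α₀ + ((k + j : ℤ) : GaussianInt) * δ)
        (α₀ + ((k + j' : ℤ) : GaussianInt) * δ)) :
    (∃ k : ℤ, (⟨1, 1⟩ : GaussianInt) ∣ α₀ + (k : GaussianInt) * δ) ∧
    (∃ k : ℤ, (3 : GaussianInt) ∣ α₀ + (k : GaussianInt) * δ) ∧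
    (∃ k : ℤ, (⟨1, 2⟩ : GaussianInt) ∣ α₀ + (k : GaussianInt) * δ) ∧
    (∃ k : ℤ, (⟨1, -2⟩ : GaussianInt) ∣ α₀ + (k : GaussianInt) * δ) ∧
    (∃ t : ℤ, ((⟨1, 2⟩ : GaussianInt) ∣ α₀ + (t : GaussianInt) * δ ∧
        (⟨1, -2⟩ : GaussianInt) ∣ α₀ + ((t + 1 : ℤ) : GaussianInt) * δ) ∨
      ((⟨1, -2⟩ : GaussianInt) ∣ α₀ + (t : GaussianInt) * δ ∧
        (⟨1, 2⟩ : GaussianInt) ∣ α₀ + ((t + 1 : ℤ) : GaussianInt) * δ)) := by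
  obtain ⟨k, hk⟩ := hseq
  have hδ0 : δ ≠ 0 := by
    intro h0
    rw [h0] at hδ
    simp at hδ
  -- the four divisibility predicates on window positions
  set P₂ : ℤ → Prop := fun j => (⟨1, 1⟩ : GaussianInt) ∣ α₀ + ((k + j : ℤ) : GaussianInt) * δ with hP₂
  set P₃ : ℤ → Prop := fun j => (3 : GaussianInt) ∣ α₀ + ((k + j : ℤ) : GaussianInt) * δ with hP₃
  set P₅ : ℤ → Prop := fun j => (⟨1, 2⟩ : GaussianInt) ∣ α₀ + ((k + j : ℤ) : GaussianInt) * δ with hP₅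
  set P₅' : ℤ → Prop := fun j => (⟨1, -2⟩ : GaussianInt) ∣ α₀ + ((k + j : ℤ) : GaussianInt) * δ with hP₅'
  -- pair lemmas
  have pair2 : ∀ m n : ℤ, P₂ m → P₂ n → (2 : ℤ) ∣ m - n := by
    intro m n h1 h2
    have := gl7_pair α₀ δ h gl7_prime_i1 h1 h2
    have e : (k + m) - (k + n) = m - n := by ring
    rw [e] at this
    exact gl7_int_dvd Int.prime_two (by decide) this
  have pair3 : ∀ m n : ℤ, P₃ m → P₃ n → (3 : ℤ) ∣ m - n := by
    intro m n h1 h2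
    have := gl7_pair α₀ δ h gl7_prime_3 h1 h2
    have e : (k + m) - (k + n) = m - n := by ring
    rw [e] at this
    exact gl7_int_dvd Int.prime_three (by decide) this
  have pair5 : ∀ m n : ℤ, P₅ m → P₅ n → (5 : ℤ) ∣ m - n := by
    intro m n h1 h2
    have := gl7_pair α₀ δ h gl7_prime_i2 h1 h2
    have e : (k + m) - (k + n) = m - n := by ring
    rw [e] at this
    exact gl7_int_dvd (by norm_num) (by decide) this
  have pair5' : ∀ m n : ℤ, P₅' m → P₅' n → (5 : ℤ) ∣ m - n := by
    intro m n h1 h2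
    have := gl7_pair α₀ δ h gl7_prime_im2 h1 h2
    have e : (k + m) - (k + n) = m - n := by ring
    rw [e] at this
    exact gl7_int_dvd (by norm_num) (by decide) this
  -- spread lemmas
  have spread5 : ∀ m n : ℤ, P₅ m → (5 : ℤ) ∣ n - m → P₅ n := by
    intro m n h1 hdvd
    have hp : (⟨1, 2⟩ : GaussianInt) ∣ ((5 : ℤ) : GaussianInt) := ⟨⟨1, -2⟩, by decide⟩
    have hdvd' : (5 : ℤ) ∣ (k + n) - (k + m) := by
      have e : (k + n) - (k + m) = n - m := by ring
      rw [e]; exact hdvd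
    exact gl7_spread α₀ δ hp h1 hdvd'
  have spread5' : ∀ m n : ℤ, P₅' m → (5 : ℤ) ∣ n - m → P₅' n := by
    intro m n h1 hdvd
    have hp : (⟨1, -2⟩ : GaussianInt) ∣ ((5 : ℤ) : GaussianInt) := ⟨⟨1, 2⟩, by decide⟩
    have hdvd' : (5 : ℤ) ∣ (k + n) - (k + m) := by
      have e : (k + n) - (k + m) = n - m := by ring
      rw [e]; exact hdvd
    exact gl7_spread α₀ δ hp h1 hdvd'
  -- coverage
  have cover : ∀ j ∈ Finset.Icc (1 : ℤ) 7, ∃ j' ∈ Finset.Icc (1 : ℤ) 7, j' ≠ j ∧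
      ((P₂ j ∧ P₂ j') ∨ (P₃ j ∧ P₃ j') ∨ (P₅ j ∧ P₅ j') ∨ (P₅' j ∧ P₅' j')) := by
    intro j hj
    obtain ⟨j', hj', hne, hnc⟩ := hk j hj
    refine ⟨j', hj', hne, ?_⟩
    have hnz : ¬(α₀ + ((k + j : ℤ) : GaussianInt) * δ = 0 ∧
        α₀ + ((k + j' : ℤ) : GaussianInt) * δ = 0) := by
      rintro ⟨e1, e2⟩
      have e3 : (((k + j) - (k + j') : ℤ) : GaussianInt) * δ = 0 := by
        have : (α₀ + ((k + j : ℤ) : GaussianInt) * δ) - (α₀ + ((k + j' : ℤ) : GaussianInt) * δ)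
            = (((k + j) - (k + j') : ℤ) : GaussianInt) * δ := by push_cast; ring
        rw [← this, e1, e2, sub_zero]
      rcases mul_eq_zero.1 e3 with e4 | e4
      · have : ((k + j) - (k + j') : ℤ) = 0 := by
          have := Zsqrtd.ext_iff.1 e4
          simpa [Zsqrtd.re_intCast] using this.1
        omega
      · exact hδ0 e4
    have hH : ¬∀ z ∈ nonunits GaussianInt, z ≠ 0 →
        z ∣ α₀ + ((k + j : ℤ) : GaussianInt) * δ →
        ¬z ∣ α₀ + ((k + j' : ℤ) : GaussianInt) * δ :=
      fun H => hnc (EuclideanDomain.isCoprime_of_dvd hnz H)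
    push_neg at hH
    obtain ⟨z, hzn, hz0, hzx, hzy⟩ := hH
    obtain ⟨π, hirr, hπz⟩ := WfDvdMonoid.exists_irreducible_factor (mem_nonunits_iff.1 hzn) hz0
    have hπ : Prime π := UniqueFactorizationMonoid.irreducible_iff_prime.1 hirr
    have hdx : π ∣ α₀ + ((k + j : ℤ) : GaussianInt) * δ := hπz.trans hzx
    have hdy : π ∣ α₀ + ((k + j' : ℤ) : GaussianInt) * δ := hπz.trans hzy
    have hdiff : π ∣ (((k + j) - (k + j') : ℤ) : GaussianInt) := gl7_pair α₀ δ h hπ hdx hdy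
    have e : ((k + j) - (k + j') : ℤ) = j - j' := by ring
    rw [e] at hdiff
    rw [Finset.mem_Icc] at hj hj'
    rcases gl7_classify hπ (n := j - j') (by omega) (by omega) (by omega) hdiff with hc | hc | hc | hc
    · have hr := (hπ.associated_of_dvd gl7_prime_i1 hc).symm.dvd
      exact Or.inl ⟨hr.trans hdx, hr.trans hdy⟩
    · have hr := (hπ.associated_of_dvd gl7_prime_3 hc).symm.dvd
      exact Or.inr (Or.inl ⟨hr.trans hdx, hr.trans hdy⟩)
    · have hr := (hπ.associated_of_dvd gl7_prime_i2 hc).symm.dvd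
      exact Or.inr (Or.inr (Or.inl ⟨hr.trans hdx, hr.trans hdy⟩))
    · have hr := (hπ.associated_of_dvd gl7_prime_im2 hc).symm.dvd
      exact Or.inr (Or.inr (Or.inr ⟨hr.trans hdx, hr.trans hdy⟩))
  -- middle positions need P₂ ∨ P₃
  have mid : ∀ j : ℤ, 3 ≤ j → j ≤ 5 → P₂ j ∨ P₃ j := by
    intro j hj3 hj5
    have hjmem : j ∈ Finset.Icc (1 : ℤ) 7 := by rw [Finset.mem_Icc]; omega
    obtain ⟨j', hj', hne, hc⟩ := cover j hjmem
    rw [Finset.mem_Icc] at hj'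
    rcases hc with ⟨h1, _⟩ | ⟨h1, _⟩ | ⟨h1, h2⟩ | ⟨h1, h2⟩
    · exact Or.inl h1
    · exact Or.inr h1
    · have := pair5 j j' h1 h2; omega
    · have := pair5' j j' h1 h2; omega
  by_cases h4 : P₂ 4
  · exfalso
    have h3 : ¬P₂ 3 := fun hh => by have := pair2 4 3 h4 hh; omega
    have h5 : ¬P₂ 5 := fun hh => by have := pair2 4 5 h4 hh; omega
    have p33 : P₃ 3 := (mid 3 (by norm_num) (by norm_num)).resolve_left h3
    have p35 : P₃ 5 := (mid 5 (by norm_num) (by norm_num)).resolve_left h5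
    have := pair3 5 3 p35 p33
    omega
  · have p34 : P₃ 4 := (mid 4 (by norm_num) (by norm_num)).resolve_left h4
    have n33 : ¬P₃ 3 := fun hh => by have := pair3 4 3 p34 hh; omega
    have n35 : ¬P₃ 5 := fun hh => by have := pair3 4 5 p34 hh; omega
    have p23 : P₂ 3 := (mid 3 (by norm_num) (by norm_num)).resolve_right n33
    have n22 : ¬P₂ 2 := fun hh => by have := pair2 3 2 p23 hh; omega
    have n26 : ¬P₂ 6 := fun hh => by have := pair2 3 6 p23 hh; omega
    have n32 : ¬P₃ 2 := fun hh => by have := pair3 4 2 p34 hh; omega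
    have n36 : ¬P₃ 6 := fun hh => by have := pair3 4 6 p34 hh; omega
    have h2five : P₅ 2 ∨ P₅' 2 := by
      obtain ⟨j', hj', hne, hc⟩ := cover 2 (by norm_num)
      rcases hc with ⟨h1, _⟩ | ⟨h1, _⟩ | ⟨h1, _⟩ | ⟨h1, _⟩
      · exact absurd h1 n22
      · exact absurd h1 n32
      · exact Or.inl h1
      · exact Or.inr h1
    have h6five : P₅ 6 ∨ P₅' 6 := by
      obtain ⟨j', hj', hne, hc⟩ := cover 6 (by norm_num)
      rcases hc with ⟨h1, _⟩ | ⟨h1, _⟩ | ⟨h1, _⟩ | ⟨h1, _⟩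
      · exact absurd h1 n26
      · exact absurd h1 n36
      · exact Or.inl h1
      · exact Or.inr h1
    simp only [hP₂, hP₃, hP₅, hP₅'] at p23 p34 h2five h6five spread5 spread5' pair5 pair5'
    refine ⟨⟨k + 3, p23⟩, ⟨k + 4, p34⟩, ?_, ?_, ?_⟩
    · rcases h2five with h52 | h52
      · exact ⟨k + 2, h52⟩
      · rcases h6five with h56 | h56
        · exact ⟨k + 6, h56⟩
        · exact absurd (pair5' 6 2 h56 h52) (by omega)
    · rcases h2five with h52 | h52
      · rcases h6five with h56 | h56
        · exact absurd (pair5 6 2 h56 h52) (by omega)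
        · exact ⟨k + 6, h56⟩
      · exact ⟨k + 2, h52⟩
    · rcases h2five with h52 | h52
      · rcases h6five with h56 | h56
        · exact absurd (pair5 6 2 h56 h52) (by omega)
        · -- P₅ 2, P₅' 6 : get P₅' 1, use t = k + 1
          have p51 : (⟨1, -2⟩ : GaussianInt) ∣ α₀ + ((k + 1 : ℤ) : GaussianInt) * δ :=
            spread5' 6 1 h56 (by norm_num)
          refine ⟨k + 1, Or.inr ⟨p51, ?_⟩⟩
          rw [show (k + 1 + 1 : ℤ) = k + 2 from by ring]
          exact h52
      · rcases h6five with h56 | h56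
        · have p51 : (⟨1, 2⟩ : GaussianInt) ∣ α₀ + ((k + 1 : ℤ) : GaussianInt) * δ :=
            spread5 6 1 h56 (by norm_num)
          refine ⟨k + 1, Or.inl ⟨p51, ?_⟩⟩
          rw [show (k + 1 + 1 : ℤ) = k + 2 from by ring]
          exact h52
        · exact absurd (pair5' 6 2 h56 h52) (by omega)
end

section
/- Let α₀, δ be coprime Gaussian integers with δ = c + di, gcd(c,d) = 1, and α_k = α₀ + k·δ. If 7 does not divide any element of the sequence (α_k), then for every k ∈ ℤ, among the eight consecutive Gaussian integers α_{k+1}, …, α_{k+8} there is at least one that is coprime to all the others. -/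
/-!
A prime dividing two terms `α₀ + s δ`, `α₀ + t δ` of the line is prime to `δ`, so it divides
`s - t`. Inside a window of eight, `s - t` divides `420`, so the prime is an associate of
`1 + i`, `3`, `1 ± 2i` or `7`. The last is excluded, and each of the others divides the terms
of the line along a single residue class modulo `2`, `3`, `5`, `5` respectively. A finite check
shows that four such classes never pair off all eight positions of the window.
-/

theorem IsCoprime.dvd_sub_of_dvd_add_mul {R : Type*} [CommRing R] {a d p s t : R}
    (h : IsCoprime a d) (hs : p ∣ a + s * d) (ht : p ∣ a + t * d) : p ∣ s - t := by
  have hpd : IsCoprime p d := (h.add_mul_right_left s).of_isCoprime_of_dvd_left hs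
  refine hpd.dvd_of_dvd_mul_right ?_
  have hdiff : (a + s * d) - (a + t * d) = (s - t) * d := by ring
  exact hdiff ▸ dvd_sub hs ht

theorem exists_forall_eq_of_pairwise_eq {α β : Type*} [Nonempty β] {P : α → Prop} {f : α → β}
    (h : ∀ s t, P s → P t → f s = f t) : ∃ b, ∀ t, P t → f t = b := by
  by_cases hP : ∃ s, P s
  · obtain ⟨s, hs⟩ := hP
    exact ⟨f s, fun t ht => h t s ht hs⟩
  · exact ⟨Classical.arbitrary β, fun t ht => (hP ⟨t, ht⟩).elim⟩

theorem Int.dvd_420_of_abs_le_seven {n : ℤ} (hn : n ≠ 0) (h : |n| ≤ 7) : n ∣ 420 := by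
  obtain ⟨hlo, hhi⟩ := abs_le.mp h
  interval_cases n <;> first | exact absurd rfl hn | norm_num

set_option synthInstance.maxSize 256 in
theorem exists_residue_separated_in_Icc_one_eight (a : ZMod 2) (b : ZMod 3) (c d : ZMod 5) :
    ∃ j ∈ Finset.Icc (1 : ℤ) 8, ∀ j' ∈ Finset.Icc (1 : ℤ) 8, j' ≠ j →
      ((j : ZMod 2) = a → (j' : ZMod 2) ≠ a) ∧ ((j : ZMod 3) = b → (j' : ZMod 3) ≠ b) ∧
      ((j : ZMod 5) = c → (j' : ZMod 5) ≠ c) ∧ ((j : ZMod 5) = d → (j' : ZMod 5) ≠ d) := by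
  revert a b c d
  decide

namespace Zsqrtd

variable {d : ℤ}

theorem irreducible_of_natAbs_norm_prime {x : ℤ√d} (hx : x.norm.natAbs.Prime) :
    Irreducible x :=
  have : IsLocalHom (Int.natAbsHom.toMonoidHom.comp (normMonoidHom (d := d))) :=
    ⟨fun _ hu => norm_eq_one_iff.mp (Nat.isUnit_iff.mp hu)⟩
  Irreducible.of_map (f := Int.natAbsHom.toMonoidHom.comp (normMonoidHom (d := d)))
    ((Nat.irreducible_iff_nat_prime _).mpr hx)

theorem dvd_of_dvd_intCast {q : ℤ√d} {m n : ℤ} (hm : Prime m) (hmq : m ∣ q.norm)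
    (h : q ∣ (n : ℤ√d)) : m ∣ n := by
  have hnorm : q.norm ∣ n * n := norm_intCast (d := d) n ▸ map_dvd normMonoidHom h
  exact (hm.dvd_or_dvd (hmq.trans hnorm)).elim id id

theorem intCast_eq_of_dvd_add_mul {α₀ δ q : ℤ√d} {m : ℕ} {s t : ℤ} (h : IsCoprime α₀ δ)
    (hm : m.Prime) (hmq : (m : ℤ) ∣ q.norm) (hs : q ∣ α₀ + s * δ) (ht : q ∣ α₀ + t * δ) :
    (s : ZMod m) = t := by
  rw [ZMod.intCast_eq_intCast_iff_dvd_sub]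
  refine dvd_of_dvd_intCast (Nat.prime_iff_prime_int.mp hm) hmq ?_
  push_cast
  exact h.dvd_sub_of_dvd_add_mul ht hs

end Zsqrtd

namespace GaussianInt

theorem prime_factor_dvd_of_prime_dvd_420 {p : GaussianInt} (hp : Prime p)
    (h : p ∣ (420 : GaussianInt)) :
    ⟨1, 1⟩ ∣ p ∨ 3 ∣ p ∨ ⟨1, 2⟩ ∣ p ∨ ⟨1, -2⟩ ∣ p ∨ 7 ∣ p := by
  have h420 : (420 : GaussianInt) = -(⟨1, 1⟩ ^ 4 * 3 * ⟨1, 2⟩ * ⟨1, -2⟩ * 7) := by decide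
  have h3 : Prime (3 : GaussianInt) := by
    simpa using (prime_iff_mod_four_eq_three_of_nat_prime 3).mpr (by decide)
  have h7 : Prime (7 : GaussianInt) := by
    have : Fact (Nat.Prime 7) := ⟨by decide⟩
    simpa using (prime_iff_mod_four_eq_three_of_nat_prime 7).mpr (by decide)
  have hsymm {q : GaussianInt} (hq : Irreducible q) (hpq : p ∣ q) : q ∣ p :=
    hp.irreducible.dvd_symm hq hpq
  rw [h420, dvd_neg, hp.dvd_mul, hp.dvd_mul, hp.dvd_mul, hp.dvd_mul] at h
  rcases h with (((h2 | h3p) | h5) | h5') | h7p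
  · simp only [hsymm (Zsqrtd.irreducible_of_natAbs_norm_prime (by decide))
      (hp.dvd_of_dvd_pow h2), true_or]
  · simp only [hsymm h3.irreducible h3p, true_or, or_true]
  · simp only [hsymm (Zsqrtd.irreducible_of_natAbs_norm_prime (by decide)) h5, true_or, or_true]
  · simp only [hsymm (Zsqrtd.irreducible_of_natAbs_norm_prime (by decide)) h5', true_or, or_true]
  · simp only [hsymm h7.irreducible h7p, or_true]

theorem exists_isCoprime_in_Icc_one_eight {α₀ δ : GaussianInt} (h : IsCoprime α₀ δ)
    (h7 : ∀ t ∈ Finset.Icc (1 : ℤ) 8, ¬ (7 : GaussianInt) ∣ α₀ + (t : GaussianInt) * δ) :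
    ∃ j ∈ Finset.Icc (1 : ℤ) 8, ∀ j' ∈ Finset.Icc (1 : ℤ) 8, j' ≠ j →
      IsCoprime (α₀ + (j : GaussianInt) * δ) (α₀ + (j' : GaussianInt) * δ) := by
  have hclass (q : GaussianInt) (m : ℕ) (hm : m.Prime) (hmq : (m : ℤ) ∣ q.norm) :
      ∃ r : ZMod m, ∀ t : ℤ, q ∣ α₀ + (t : GaussianInt) * δ → (t : ZMod m) = r :=
    exists_forall_eq_of_pairwise_eq fun _ _ hs ht =>
      Zsqrtd.intCast_eq_of_dvd_add_mul h hm hmq hs ht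
  obtain ⟨a, ha⟩ := hclass ⟨1, 1⟩ 2 Nat.prime_two (by decide)
  obtain ⟨b, hb⟩ := hclass 3 3 Nat.prime_three (by decide)
  obtain ⟨c, hc⟩ := hclass ⟨1, 2⟩ 5 Nat.prime_five (by decide)
  obtain ⟨d, hd⟩ := hclass ⟨1, -2⟩ 5 Nat.prime_five (by decide)
  obtain ⟨j, hj, hsep⟩ := exists_residue_separated_in_Icc_one_eight a b c d
  refine ⟨j, hj, fun j' hj' hne => ?_⟩
  refine isCoprime_of_prime_dvd (fun h0 => h7 j hj (h0.1 ▸ dvd_zero 7)) fun p hp hpj hpj' => ?_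
  have hdiff : p ∣ ((j' - j : ℤ) : GaussianInt) := by
    push_cast
    exact h.dvd_sub_of_dvd_add_mul hpj' hpj
  have h420 : (j' - j) ∣ 420 := by
    have := Finset.mem_Icc.mp hj
    have := Finset.mem_Icc.mp hj'
    exact Int.dvd_420_of_abs_le_seven (sub_ne_zero.mpr hne) (abs_le.mpr ⟨by omega, by omega⟩)
  obtain ⟨hsep2, hsep3, hsep5, hsep5'⟩ := hsep j' hj' hne
  rcases prime_factor_dvd_of_prime_dvd_420 hp (hdiff.trans (by exact_mod_cast h420))
    with hq | hq | hq | hq | hq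
  · exact hsep2 (ha j (hq.trans hpj)) (ha j' (hq.trans hpj'))
  · exact hsep3 (hb j (hq.trans hpj)) (hb j' (hq.trans hpj'))
  · exact hsep5 (hc j (hq.trans hpj)) (hc j' (hq.trans hpj'))
  · exact hsep5' (hd j (hq.trans hpj)) (hd j' (hq.trans hpj'))
  · exact h7 j hj (hq.trans hpj)

end GaussianInt

theorem eight_consecutive_without_seven_general (α₀ δ : GaussianInt) (h : IsCoprime α₀ δ)
    (h7 : ∀ k : ℤ, ¬ (7 : GaussianInt) ∣ α₀ + (k : GaussianInt) * δ) (k : ℤ) :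
    ∃ j ∈ Finset.Icc (1 : ℤ) 8, ∀ j' ∈ Finset.Icc (1 : ℤ) 8, j' ≠ j →
      IsCoprime (α₀ + ((k + j : ℤ) : GaussianInt) * δ)
        (α₀ + ((k + j' : ℤ) : GaussianInt) * δ) := by
  have hshift (t : ℤ) : α₀ + ((k + t : ℤ) : GaussianInt) * δ = α₀ + k * δ + t * δ := by
    push_cast
    ring
  simp only [hshift]
  exact GaussianInt.exists_isCoprime_in_Icc_one_eight (h.add_mul_right_left k)
    fun t _ => hshift t ▸ h7 (k + t)

theorem eight_consecutive_without_seven (α₀ δ : GaussianInt) (h : IsCoprime α₀ δ)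
    (hδ : Int.gcd δ.re δ.im = 1)
    (h7 : ∀ k : ℤ, ¬ (7 : GaussianInt) ∣ α₀ + (k : GaussianInt) * δ) (k : ℤ) :
    ∃ j ∈ Finset.Icc (1 : ℤ) 8, ∀ j' ∈ Finset.Icc (1 : ℤ) 8, j' ≠ j →
      IsCoprime (α₀ + ((k + j : ℤ) : GaussianInt) * δ)
        (α₀ + ((k + j' : ℤ) : GaussianInt) * δ) :=
  eight_consecutive_without_seven_general α₀ δ h h7 k
end

section
/- Let α₀, δ be coprime Gaussian integers with δ = c + di, gcd(c,d) = 1, and α_k = α₀ + k·δ. Suppose that the only Gaussian primes π with ν(π) ≤ 100 dividing some element of the sequence are, for each rational prime p ≡ 1 mod 4 with p ≤ 100, exactly one prime π_p with ν(π_p) = p (no prime of norm 2, and no rational prime p ≡ 3 mod 4 with p ≤ 100, divides any α_k). Then every sequence of 100 consecutive terms α_{k+1}, …, α_{k+100} contains a term coprime to all the others. -/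
/-!
If no term of the window were coprime to all the others, every index `j` would share a Gaussian
prime `π` with some other index `j'`. As `α₀` and `δ` are coprime, `π` divides `j - j'`, so it lies
over a rational prime `p ≤ 99`, and then `ν(π) = p ≡ 1 (mod 4)`. Sending `j` to `p`, uniqueness of
the prime over `p` makes all indices of a fibre congruent mod `p`, so the fibre has at most
`⌈100/p⌉ = 99 / p + 1` elements; over the eleven split primes below 100 these add up to `54 < 100`.
-/

open Finset

section PrimeOverInteger

variable {R : Type*} [CommRing R] {π x y : R}

theorem Prime.dvd_sub_of_dvd_add_mul {a b : R} (hπ : Prime π) (hxy : IsCoprime x y)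
    (ha : π ∣ x + a * y) (hb : π ∣ x + b * y) : π ∣ a - b := by
  have hdiff : π ∣ (a - b) * y := by
    convert dvd_sub ha hb using 1
    ring
  refine (hπ.dvd_or_dvd hdiff).resolve_right fun hy => hπ.not_isUnit ?_
  have hx : π ∣ x := by simpa using dvd_sub ha (dvd_mul_of_dvd_right hy a)
  exact hxy.isUnit_of_dvd' hx hy

theorem Prime.exists_nat_prime_dvd_of_dvd_natCast (hπ : Prime π) {n : ℕ} (hn : n ≠ 0)
    (h : π ∣ (n : R)) : ∃ p : ℕ, p.Prime ∧ p ∣ n ∧ π ∣ (p : R) := by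
  induction n using UniqueFactorizationMonoid.induction_on_prime with
  | h₁ => exact absurd rfl hn
  | h₂ u hu => exact absurd (isUnit_of_dvd_unit h (hu.map (Nat.castRingHom R))) hπ.not_isUnit
  | h₃ a q ha hq ih =>
    rw [Nat.cast_mul] at h
    rcases hπ.dvd_or_dvd h with hq' | ha'
    · exact ⟨q, Nat.prime_iff.2 hq, dvd_mul_right q a, hq'⟩
    · obtain ⟨p, hp, hpa, hπp⟩ := ih ha ha'
      exact ⟨p, hp, hpa.mul_left q, hπp⟩

theorem Prime.dvd_intCast_iff (hπ : Prime π) {p : ℕ} (hp : p.Prime) (hπp : π ∣ (p : R))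
    (m : ℤ) : π ∣ (m : R) ↔ (p : ℤ) ∣ m := by
  refine ⟨fun hm => ?_, fun hm => hπp.trans (by exact_mod_cast Int.cast_dvd_cast _ _ hm)⟩
  by_contra hpm
  have hcop : IsCoprime (p : ℤ) m :=
    (Nat.prime_iff_prime_int.1 hp).coprime_iff_not_dvd.2 hpm
  exact hπ.not_isUnit ((hcop.map (Int.castRingHom R)).isUnit_of_dvd' (by simpa using hπp)
    (by simpa using hm))

theorem Prime.modEq_of_dvd_add_mul (hπ : Prime π) {p : ℕ} (hp : p.Prime) (hπp : π ∣ (p : R))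
    (hxy : IsCoprime x y) {a b : ℤ} (ha : π ∣ x + a * y) (hb : π ∣ x + b * y) :
    a ≡ b [ZMOD p] := by
  rw [Int.modEq_iff_dvd, ← hπ.dvd_intCast_iff hp hπp, Int.cast_sub]
  exact hπ.dvd_sub_of_dvd_add_mul hxy hb ha

variable [IsDomain R] [IsPrincipalIdealRing R] [CharZero R]

theorem exists_prime_dvd_of_not_isCoprime_add_mul (hxy : IsCoprime x y) {a b : ℤ} (hab : a ≠ b)
    (h : ¬IsCoprime (x + a * y) (x + b * y)) :
    ∃ p : ℕ, p.Prime ∧ a ≡ b [ZMOD p] ∧ ∃ π : R, Prime π ∧ π ∣ (p : R) ∧ π ∣ x + a * y := by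
  have hnz : ¬(x + a * y = 0 ∧ x + b * y = 0) := by
    rintro ⟨ha, hb⟩
    have hy : y = 0 := by
      have : ((a - b : ℤ) : R) * y = 0 := by push_cast; linear_combination ha - hb
      exact (mul_eq_zero.1 this).resolve_left (by exact_mod_cast sub_ne_zero.2 hab)
    subst hy
    simp only [mul_zero, add_zero] at ha
    subst ha
    exact not_isCoprime_zero_zero hxy
  obtain ⟨π, hπ, ha, hb⟩ : ∃ π, Prime π ∧ π ∣ x + a * y ∧ π ∣ x + b * y := by
    by_contra! H
    exact h (isCoprime_of_prime_dvd hnz H)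
  have hdiff : π ∣ ((a - b).natAbs : R) := by
    have := hπ.dvd_sub_of_dvd_add_mul hxy ha hb
    rw [← Int.cast_sub] at this
    exact this.trans (by simpa using Int.cast_dvd_cast _ _ (Int.dvd_natAbs_self (a := a - b)))
  obtain ⟨p, hp, -, hπp⟩ := hπ.exists_nat_prime_dvd_of_dvd_natCast (by omega) hdiff
  exact ⟨p, hp, hπ.modEq_of_dvd_add_mul hp hπp hxy ha hb, π, hπ, hπp, ha⟩

end PrimeOverInteger

namespace GaussianInt

theorem norm_eq_sq_add_sq_s19 (β : GaussianInt) : β.norm = β.re ^ 2 + β.im ^ 2 := by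
  rw [Zsqrtd.norm_def]
  ring

theorem sq_gcd_dvd_norm (β : GaussianInt) : (Int.gcd β.re β.im : ℤ) ^ 2 ∣ β.norm := by
  rw [norm_eq_sq_add_sq_s19]
  exact dvd_add (pow_dvd_pow_of_dvd (Int.gcd_dvd_left ..) 2)
    (pow_dvd_pow_of_dvd (Int.gcd_dvd_right ..) 2)

theorem norm_eq_or_associated_of_dvd_natCast {π : GaussianInt} (hπ : Prime π) {p : ℕ}
    (hp : p.Prime) (h : π ∣ p) : π.norm = p ∨ Associated π p := by
  obtain ⟨c, hc⟩ := h
  have hmul : π.norm.natAbs * c.norm.natAbs = p ^ 2 := by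
    rw [← Int.natAbs_mul, ← Zsqrtd.norm_mul, ← hc, Zsqrtd.norm_natCast, ← sq]
    simp
  obtain ⟨i, hi, hπi⟩ := (Nat.dvd_prime_pow hp).1 (Dvd.intro _ hmul)
  interval_cases i
  · exact absurd (Zsqrtd.norm_eq_one_iff.1 (by simpa using hπi)) hπ.not_isUnit
  · left
    rw [← abs_natCast_norm, hπi, pow_one]
  · right
    have hc1 : c.norm.natAbs = 1 := by
      rw [hπi] at hmul
      exact (Nat.mul_eq_left (pow_ne_zero 2 hp.ne_zero)).1 hmul
    exact ⟨(Zsqrtd.norm_eq_one_iff.1 hc1).unit, hc.symm⟩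

end GaussianInt

open GaussianInt in
theorem nu_eq_of_norm_eq_prime {β : GaussianInt} {p : ℕ} (hp : p.Prime) (hβ : β.norm = p) :
    nu β = p := by
  have hg : Int.gcd β.re β.im = 1 := by
    have hgp : Int.gcd β.re β.im ^ 2 ∣ p := by exact_mod_cast hβ ▸ sq_gcd_dvd_norm β
    exact Nat.isUnit_iff.1 (hp.prime.squarefree _ (by rwa [← sq]))
  rw [nu, hg, ← norm_eq_sq_add_sq_s19, hβ]
  simp

open GaussianInt in
theorem nu_eq_of_associated_natCast {β : GaussianInt} {p : ℕ} (hβ : Associated β p) :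
    nu β = p := by
  have hnorm : β.norm = p ^ 2 := by
    obtain ⟨u, hu⟩ := hβ.symm
    rw [← hu, Zsqrtd.norm_mul, Zsqrtd.norm_natCast,
      (Zsqrtd.norm_eq_one_iff' (by norm_num) _).2 u.isUnit]
    ring
  have hpg : p ∣ Int.gcd β.re β.im := by
    have := (Zsqrtd.intCast_dvd p β).1 (by simpa using hβ.symm.dvd)
    exact Int.natCast_dvd_natCast.1 (Int.dvd_coe_gcd this.1 this.2)
  have hgp : Int.gcd β.re β.im ∣ p :=
    (Nat.pow_dvd_pow_iff two_ne_zero).1 (by exact_mod_cast hnorm ▸ sq_gcd_dvd_norm β)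
  rw [nu, Nat.dvd_antisymm hgp hpg, ← norm_eq_sq_add_sq_s19, hnorm]
  rcases eq_or_ne p 0 with rfl | hp
  · simp
  · rw [sq, Int.mul_ediv_cancel _ (by exact_mod_cast hp)]

theorem nu_eq_of_prime_dvd_natCast {π : GaussianInt} (hπ : Prime π) {p : ℕ} (hp : p.Prime)
    (h : π ∣ p) : nu π = p :=
  (GaussianInt.norm_eq_or_associated_of_dvd_natCast hπ hp h).elim (nu_eq_of_norm_eq_prime hp)
    nu_eq_of_associated_natCast

theorem Finset.card_le_of_subset_Icc_of_modEq {T : Finset ℤ} {a : ℤ} {n p : ℕ} (hp : 0 < p)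
    (hT : T ⊆ Icc a (a + n)) (hmod : ∀ x ∈ T, ∀ y ∈ T, x ≡ y [ZMOD p]) : #T ≤ n / p + 1 := by
  have hp' : (0 : ℤ) < p := by exact_mod_cast hp
  have hcard : #T ≤ #(Icc (0 : ℤ) (n / p)) := by
    refine card_le_card_of_injOn (fun x => (x - a) / p) (fun x hx => ?_) fun x hx y hy hxy => ?_
    · have := mem_Icc.1 (hT hx)
      exact mem_Icc.2 ⟨Int.ediv_nonneg (by omega) hp'.le, Int.ediv_le_ediv hp' (by omega)⟩
    · have hxy' : (x - a) % p = (y - a) % p := (hmod x hx y hy).sub_right a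
      have := Int.emod_add_mul_ediv (x - a) p
      have := Int.emod_add_mul_ediv (y - a) p
      simp only at hxy
      rw [hxy] at *
      linarith
  rwa [Int.card_Icc, sub_zero, ← Int.natCast_div, ← Int.natCast_one, ← Int.natCast_add,
    Int.toNat_natCast] at hcard

def splitPrimesBelow (n : ℕ) : Finset ℕ := {p ∈ range n | p.Prime ∧ p % 4 = 1}

theorem sum_splitPrimesBelow_hundred :
    ∑ p ∈ splitPrimesBelow 100, (99 / p + 1) = 54 := by
  decide

section ArithmeticProgression

variable {α₀ δ : GaussianInt} {N : ℕ}

theorem exists_splitPrime_dvd_of_not_isCoprime (h : IsCoprime α₀ δ)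
    (hsplit : ∀ π : GaussianInt, Prime π → nu π ≤ N →
      (∃ k : ℤ, π ∣ α₀ + (k : GaussianInt) * δ) → nu π % 4 = 1)
    {a b : ℤ} (hab : a ≠ b) (habN : (a - b).natAbs < N)
    (hnc : ¬IsCoprime (α₀ + (a : GaussianInt) * δ) (α₀ + (b : GaussianInt) * δ)) :
    ∃ p ∈ splitPrimesBelow N, ∃ π : GaussianInt,
      Prime π ∧ π ∣ (p : GaussianInt) ∧ π ∣ α₀ + (a : GaussianInt) * δ := by
  obtain ⟨p, hp, hab', π, hπ, hπp, hπa⟩ := exists_prime_dvd_of_not_isCoprime_add_mul h hab hnc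
  have hpN : p < N := by
    have := Int.natAbs_le_of_dvd_ne_zero hab'.dvd (sub_ne_zero.2 hab.symm)
    omega
  have hp4 := hsplit π hπ (by rw [nu_eq_of_prime_dvd_natCast hπ hp hπp]; omega) ⟨a, hπa⟩
  rw [nu_eq_of_prime_dvd_natCast hπ hp hπp] at hp4
  exact ⟨p, mem_filter.2 ⟨mem_range.2 hpN, hp, by omega⟩, π, hπ, hπp, hπa⟩

theorem modEq_of_dvd_of_associated_primes_over (h : IsCoprime α₀ δ)
    (huniq : ∀ π π' : GaussianInt, Prime π → Prime π' → nu π ≤ N → nu π = nu π' →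
      (∃ k : ℤ, π ∣ α₀ + (k : GaussianInt) * δ) →
      (∃ k : ℤ, π' ∣ α₀ + (k : GaussianInt) * δ) → Associated π π')
    {p : ℕ} (hp : p.Prime) (hpN : p ≤ N) {π π' : GaussianInt} (hπ : Prime π) (hπ' : Prime π')
    (hπp : π ∣ (p : GaussianInt)) (hπ'p : π' ∣ (p : GaussianInt)) {a b : ℤ}
    (ha : π ∣ α₀ + (a : GaussianInt) * δ) (hb : π' ∣ α₀ + (b : GaussianInt) * δ) :
    a ≡ b [ZMOD p] := by
  have hν := nu_eq_of_prime_dvd_natCast hπ hp hπp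
  have hassoc : Associated π π' :=
    huniq π π' hπ hπ' (by omega) (by rw [hν, nu_eq_of_prime_dvd_natCast hπ' hp hπ'p]) ⟨a, ha⟩
      ⟨b, hb⟩
  exact hπ.modEq_of_dvd_add_mul hp hπp h ha (hassoc.dvd.trans hb)

end ArithmeticProgression

theorem hundred_consecutive_has_coprime_general (α₀ δ : GaussianInt) (h : IsCoprime α₀ δ)
    -- every Gaussian prime with ν ≤ 100 dividing some term lies over a rational
    -- prime p ≡ 1 (mod 4) (so no prime of norm 2 and no inert prime p ≤ 100 divides any term)
    (h1 : ∀ π : GaussianInt, Prime π → nu π ≤ 100 →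
      (∃ k : ℤ, π ∣ α₀ + (k : GaussianInt) * δ) →
        Prime (nu π) ∧ nu π % 4 = 1)
    -- for each such rational prime there is exactly one prime over it (up to associates)
    -- dividing elements of the sequence
    (h2 : ∀ π π' : GaussianInt, Prime π → Prime π' → nu π ≤ 100 → nu π = nu π' →
      (∃ k : ℤ, π ∣ α₀ + (k : GaussianInt) * δ) →
      (∃ k : ℤ, π' ∣ α₀ + (k : GaussianInt) * δ) → Associated π π')
    (k : ℤ) :
    ∃ j ∈ Finset.Icc (1 : ℤ) 100, ∀ j' ∈ Finset.Icc (1 : ℤ) 100, j' ≠ j →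
      IsCoprime (α₀ + ((k + j : ℤ) : GaussianInt) * δ)
        (α₀ + ((k + j' : ℤ) : GaussianInt) * δ) := by
  by_contra! hcon
  have witness : ∀ j ∈ Icc (1 : ℤ) 100, ∃ p ∈ splitPrimesBelow 100, ∃ π : GaussianInt,
      Prime π ∧ π ∣ (p : GaussianInt) ∧ π ∣ α₀ + ((k + j : ℤ) : GaussianInt) * δ := by
    intro j hj
    obtain ⟨j', hj', hne, hnc⟩ := hcon j hj
    rw [mem_Icc] at hj hj'
    exact exists_splitPrime_dvd_of_not_isCoprime (N := 100) h
      (fun π hπ hν hk => (h1 π hπ hν hk).2) (by omega) (by omega) hnc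
  choose! pr hprS π hπ hπpr hπj using witness
  have fiber (q) (hq : q ∈ splitPrimesBelow 100) :
      #{j ∈ Icc (1 : ℤ) 100 | pr j = q} ≤ 99 / q + 1 := by
    obtain ⟨hq100, hq, -⟩ := mem_filter.1 hq
    refine card_le_of_subset_Icc_of_modEq hq.pos (filter_subset _ _) fun j₁ hj₁ j₂ hj₂ => ?_
    rw [mem_filter] at hj₁ hj₂
    exact Int.ModEq.add_left_cancel' k <| modEq_of_dvd_of_associated_primes_over h h2 hq
      (mem_range.1 hq100).le (hπ _ hj₁.1) (hπ _ hj₂.1) (hj₁.2 ▸ hπpr _ hj₁.1)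
      (hj₂.2 ▸ hπpr _ hj₂.1) (hπj _ hj₁.1) (hπj _ hj₂.1)
  have : 100 ≤ 54 := calc
    100 = #(Icc (1 : ℤ) 100) := by simp
    _ = ∑ q ∈ splitPrimesBelow 100, #{j ∈ Icc (1 : ℤ) 100 | pr j = q} :=
      card_eq_sum_card_fiberwise hprS
    _ ≤ ∑ q ∈ splitPrimesBelow 100, (99 / q + 1) := sum_le_sum fiber
    _ = 54 := sum_splitPrimesBelow_hundred
  omega

theorem hundred_consecutive_has_coprime (α₀ δ : GaussianInt) (h : IsCoprime α₀ δ)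
    (hδ : Int.gcd δ.re δ.im = 1)
    -- every Gaussian prime with ν ≤ 100 dividing some term lies over a rational
    -- prime p ≡ 1 (mod 4) (so no prime of norm 2 and no inert prime p ≤ 100 divides any term)
    (h1 : ∀ π : GaussianInt, Prime π → nu π ≤ 100 →
      (∃ k : ℤ, π ∣ α₀ + (k : GaussianInt) * δ) →
        Prime (nu π) ∧ nu π % 4 = 1)
    -- for each such rational prime there is exactly one prime over it (up to associates)
    -- dividing elements of the sequence
    (h2 : ∀ π π' : GaussianInt, Prime π → Prime π' → nu π ≤ 100 → nu π = nu π' →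
      (∃ k : ℤ, π ∣ α₀ + (k : GaussianInt) * δ) →
      (∃ k : ℤ, π' ∣ α₀ + (k : GaussianInt) * δ) → Associated π π')
    (k : ℤ) :
    ∃ j ∈ Finset.Icc (1 : ℤ) 100, ∀ j' ∈ Finset.Icc (1 : ℤ) 100, j' ≠ j →
      IsCoprime (α₀ + ((k + j : ℤ) : GaussianInt) * δ)
        (α₀ + ((k + j' : ℤ) : GaussianInt) * δ) :=
  hundred_consecutive_has_coprime_general α₀ δ h h1 h2 k
end
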